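/- arXiv:1309.7824 — 2 statements merged into one kernel-verified Lean document; each statement's English description precedes it below -/
import Mathlib

section
/- For a positive definite matrix A(λ) = Σ_{i=1}^n λ_i x_i x_iᵀ, the partial derivative of the squared Frobenius norm ‖A(λ)^{-1}‖_F² with respect to λ_i equals -2 x_iᵀ A(λ)^{-3} x_i. -/
/-! With `C = A(λ)⁻¹` we have `∂ᵢ A = xᵢ xᵢᵀ`, hence `∂ᵢ C = -C xᵢ xᵢᵀ C`. Differentiating
`tr (C Cᵀ)` gives `2 tr (∂ᵢC · Cᵀ)`, and the symmetry of `C` together with the cyclicity of the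
trace turns this into `-2 xᵢᵀ C³ xᵢ`. -/

open Matrix

-- Only the product topology enters the statements; the `L∞` operator norm is a convenient normed
-- algebra structure inducing it.
attribute [local instance] Matrix.linftyOpNormedAddCommGroup Matrix.linftyOpNormedSpace
  Matrix.linftyOpNormedRing Matrix.linftyOpNormedAlgebra

theorem hasDerivAt_sum_update_smul {𝕜 ι E : Type*} [NontriviallyNormedField 𝕜] [Fintype ι]
    [DecidableEq ι] [NormedAddCommGroup E] [NormedSpace 𝕜 E]
    (lam : ι → 𝕜) (M : ι → E) (i : ι) (t : 𝕜) :
    HasDerivAt (fun s => ∑ j, Function.update lam i s j • M j) (M i) t := by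
  have h := HasDerivAt.fun_sum (u := Finset.univ) fun j _ =>
    (hasDerivAt_pi.1 (hasDerivAt_update lam i t) j).smul_const (M j)
  simpa [Pi.single_apply] using h

namespace Matrix

variable {𝕜 m n : Type*} [RCLike 𝕜] [Fintype m] [Fintype n] {t : 𝕜}

theorem trace_vecMulVec_mul (u v : m → 𝕜) (M : Matrix m m 𝕜) :
    (vecMulVec u v * M).trace = v ⬝ᵥ M *ᵥ u := by
  rw [vecMulVec_mul, trace_vecMulVec, dotProduct_comm, dotProduct_mulVec]

theorem _root_.HasDerivAt.matrix_transpose {f : 𝕜 → Matrix m n 𝕜} {f' : Matrix m n 𝕜}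
    (hf : HasDerivAt f f' t) : HasDerivAt (fun s => (f s)ᵀ) f'ᵀ t :=
  (LinearMap.toContinuousLinearMap
    (transposeLinearEquiv m n 𝕜 𝕜).toLinearMap).hasFDerivAt.comp_hasDerivAt t hf

theorem _root_.HasDerivAt.matrix_trace {f : 𝕜 → Matrix m m 𝕜} {f' : Matrix m m 𝕜}
    (hf : HasDerivAt f f' t) : HasDerivAt (fun s => (f s).trace) f'.trace t :=
  (LinearMap.toContinuousLinearMap (traceLinearMap m 𝕜 𝕜)).hasFDerivAt.comp_hasDerivAt t hf

variable [DecidableEq m]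

theorem _root_.HasDerivAt.matrix_inv {f : 𝕜 → Matrix m m 𝕜} {f' : Matrix m m 𝕜}
    (hf : HasDerivAt f f' t) (ht : IsUnit (f t)) :
    HasDerivAt (fun s => (f s)⁻¹) (-((f t)⁻¹ * f' * (f t)⁻¹)) t := by
  obtain ⟨u, hu⟩ := ht
  have h := (hasFDerivAt_ringInverse (𝕜 := 𝕜) u).comp_hasDerivAt_of_eq t hf hu
  simp only [nonsing_inv_eq_ringInverse, ← hu, Ring.inverse_unit]
  exact h

theorem _root_.HasDerivAt.trace_mul_transpose_self {f : 𝕜 → Matrix m m 𝕜} {f' : Matrix m m 𝕜}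
    (hf : HasDerivAt f f' t) :
    HasDerivAt (fun s => (f s * (f s)ᵀ).trace) (2 * (f' * (f t)ᵀ).trace) t := by
  have h := (hf.mul hf.matrix_transpose).matrix_trace
  rwa [trace_add, ← trace_transpose (f t * f'ᵀ), transpose_mul, transpose_transpose,
    ← two_mul] at h

end Matrix

/-- For `A(λ) = ∑ i, λ i • x i x iᵀ` positive definite, the partial derivative of
`‖A(λ)⁻¹‖_F² = trace (A(λ)⁻¹ (A(λ)⁻¹)ᵀ)` with respect to `λ i` is `-2 x iᵀ A(λ)⁻³ x i`. -/
theorem stmt_1 {n d : ℕ} (x : Fin n → Fin d → ℝ) (lam : Fin n → ℝ)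
    (A : (Fin n → ℝ) → Matrix (Fin d) (Fin d) ℝ)
    (hA : A = fun l => ∑ i, l i • vecMulVec (x i) (x i))
    (hpd : (A lam).PosDef) (i : Fin n) :
    HasDerivAt
      (fun t : ℝ => ((A (Function.update lam i t))⁻¹ * ((A (Function.update lam i t))⁻¹)ᵀ).trace)
      (-2 * (x i ⬝ᵥ ((A lam)⁻¹ * (A lam)⁻¹ * (A lam)⁻¹) *ᵥ x i)) (lam i) := by
  have hAderiv : HasDerivAt (fun t => A (Function.update lam i t)) (vecMulVec (x i) (x i)) (lam i) :=
    hA ▸ hasDerivAt_sum_update_smul lam (fun j => vecMulVec (x j) (x j)) i (lam i)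
  have hunit : IsUnit (A (Function.update lam i (lam i))) := by
    simpa only [Function.update_eq_self] using hpd.isUnit
  have h := (hAderiv.matrix_inv hunit).trace_mul_transpose_self
  simp only [Function.update_eq_self] at h
  have hsymm : ((A lam)⁻¹)ᵀ = (A lam)⁻¹ := by
    simpa only [conjTranspose_eq_transpose_of_trivial] using hpd.isHermitian.inv.eq
  refine h.congr_deriv ?_
  set C := (A lam)⁻¹
  rw [hsymm, neg_mul, trace_neg, Matrix.mul_assoc, Matrix.mul_assoc, trace_mul_comm C,
    Matrix.mul_assoc, trace_vecMulVec_mul]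
  ring
end

section
/- Let T : ℝ^n → ℝ^n be continuous and order-reversing (λ ≤ λ' coordinatewise implies T(λ) ≥ T(λ') coordinatewise). If there exists λ* with T(λ*) ≤ √n λ* and T(√n λ*) = λ*, then T has a fixed point λ' with λ* ≤ λ' ≤ √n λ* (coordinatewise). -/
/-!
For `λ* ≤ x ≤ √n λ*` antitonicity gives `λ* = T (√n λ*) ≤ T x ≤ T λ* ≤ √n λ*`, so `T` maps the
box `[λ*, √n λ*]` into itself and the theorem is Brouwer's fixed point theorem for a box, which is
a retract of a ball.

Brouwer's theorem is proved analytically. Smooth approximation reduces it to `C¹` maps `g` of a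
closed ball `B`; if `g` had no fixed point, following the ray from `g x` through `x` would give a
`C¹` retraction `r` of a neighbourhood of `B` onto `∂B`. For small `τ`, `x ↦ x + τ (r x - x)` is
a diffeomorphism of `B` onto itself, so `∫_B det (id + τ (Dr - id)) = vol B`. The left side is a
polynomial in `τ`, so the identity persists at `τ = 1`; but `det Dr = 0` because `r` takes its
values in a sphere.
-/

open Metric Set MeasureTheory Topology Polynomial
open scoped RealInnerProductSpace ContDiff

theorem exists_polynomial_integral_eval_eq {X : Type*} [MeasurableSpace X] (μ : Measure X)
    (p : X → ℝ[X]) (m : ℕ) (hdeg : ∀ x, (p x).natDegree ≤ m)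
    (hint : ∀ τ, Integrable (fun x => (p x).eval τ) μ) :
    ∃ q : ℝ[X], ∀ τ, ∫ x, (p x).eval τ ∂μ = q.eval τ := by
  classical
  -- interpolate every `p x` at the nodes `0, 1, …, m`
  set s := Finset.range (m + 1)
  have hv : Set.InjOn (Nat.cast : ℕ → ℝ) s := Nat.cast_injective.injOn
  refine ⟨Lagrange.interpolate s Nat.cast fun i => ∫ x, (p x).eval (i : ℝ) ∂μ, fun τ => ?_⟩
  have hp : ∀ x, (p x).eval τ
      = ∑ i ∈ s, (p x).eval (i : ℝ) * (Lagrange.basis s Nat.cast i).eval τ := by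
    intro x
    have hlt : (p x).degree < s.card := by
      rw [Finset.card_range]
      exact (degree_le_of_natDegree_le (hdeg x)).trans_lt (by exact_mod_cast m.lt_succ_self)
    conv_lhs => rw [Lagrange.eq_interpolate hv hlt]
    simp [Lagrange.interpolate_apply, eval_finsetSum]
  simp_rw [hp]
  rw [integral_finsetSum s fun i _ => (hint i).mul_const ((Lagrange.basis s Nat.cast i).eval τ)]
  simp [Lagrange.interpolate_apply, eval_finsetSum, integral_mul_const]

theorem LinearMap.exists_natDegree_le_eval_eq_det_one_add_smul {K E : Type*} [Field K]
    [AddCommGroup E] [Module K E] [FiniteDimensional K E] (A : E →ₗ[K] E) :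
    ∃ p : K[X], p.natDegree ≤ Module.finrank K E ∧ ∀ τ, p.eval τ = LinearMap.det (1 + τ • A) := by
  classical
  let b := Module.finBasis K E
  refine ⟨Matrix.det ((X : K[X]) • (toMatrix b b A).map C + (1 : Matrix _ _ K).map C), ?_,
    fun τ => ?_⟩
  · simpa using natDegree_det_X_add_C_le (toMatrix b b A) 1
  · rw [← LinearMap.det_toMatrix b, map_add, map_smul, Module.End.one_eq_id,
      LinearMap.toMatrix_id, ← Polynomial.coe_evalRingHom, RingHom.map_det]
    congr 1
    ext i j
    simp only [RingHom.mapMatrix_apply, Matrix.map_apply, Matrix.add_apply, Matrix.smul_apply,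
      Matrix.one_apply, smul_eq_mul, map_add, coe_evalRingHom, eval_mul, eval_X, eval_C]
    ring

theorem integral_det_one_add_smul_eq_of_infinite {X E : Type*} [MeasurableSpace X]
    {μ : Measure X} [NormedAddCommGroup E] [NormedSpace ℝ E] [FiniteDimensional ℝ E]
    {A : X → E →L[ℝ] E} (hA : ∀ τ : ℝ, Integrable (fun x => (1 + τ • A x).det) μ) {S : Set ℝ}
    (hS : S.Infinite) {c : ℝ} (hSc : ∀ τ ∈ S, ∫ x, (1 + τ • A x).det ∂μ = c) (τ : ℝ) :
    ∫ x, (1 + τ • A x).det ∂μ = c := by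
  choose p hpdeg hpeval using fun x =>
    LinearMap.exists_natDegree_le_eval_eq_det_one_add_smul (A x : E →ₗ[ℝ] E)
  have hp : ∀ x τ, (p x).eval τ = (1 + τ • A x).det := hpeval
  simp_rw [← hp] at hA hSc ⊢
  obtain ⟨q, hq⟩ := exists_polynomial_integral_eval_eq μ p _ hpdeg hA
  simp_rw [hq] at hSc ⊢
  rw [Polynomial.eq_of_infinite_eval_eq q (C c) (hS.mono fun τ hτ => by simp [hSc τ hτ]), eval_C]

theorem ContinuousLinearMap.det_one_add_pos_of_norm_lt_one {F : Type*} [NormedAddCommGroup F]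
    [NormedSpace ℝ F] [CompleteSpace F] {w : F →L[ℝ] F} (hw : ‖w‖ < 1) : 0 < (1 + w).det := by
  have hne : ∀ s ∈ Icc (0 : ℝ) 1, (1 + s • w).det ≠ 0 := by
    intro s hs
    have hsw : ‖-(s • w)‖ < 1 := by
      rw [norm_neg, norm_smul, Real.norm_of_nonneg hs.1]
      nlinarith [norm_nonneg w, hs.2]
    have hunit : IsUnit (1 + s • w) := by
      simpa [sub_neg_eq_add] using (Units.oneSub _ hsw).isUnit
    exact (LinearMap.isUnit_det _ (hunit.map toLinearMapRingHom)).ne_zero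
  by_contra! hle
  have hcont : ContinuousOn (fun s : ℝ => (1 + s • w).det) (Icc 0 1) :=
    (continuous_det.comp (continuous_const.add (continuous_id.smul continuous_const))).continuousOn
  obtain ⟨s, hs, h0⟩ := intermediate_value_Icc' zero_le_one hcont
    (show (0 : ℝ) ∈ Icc _ _ from ⟨by simpa using hle, by simp [ContinuousLinearMap.det]⟩)
  exact hne s hs h0

theorem ContinuousLinearMap.det_eq_zero_of_eventually_norm_eq {E : Type*} [NormedAddCommGroup E]
    [InnerProductSpace ℝ E] [FiniteDimensional ℝ E] {r : E → E} {r' : E →L[ℝ] E} {x : E} {R : ℝ}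
    (hr : HasFDerivAt r r' x) (hR : R ≠ 0) (hnorm : ∀ᶠ y in 𝓝 x, ‖r y‖ = R) : r'.det = 0 := by
  by_contra hdet
  obtain ⟨v, hv⟩ : ∃ v, r' v = r x :=
    ⟨(r'.toContinuousLinearEquivOfDetNeZero hdet).symm (r x), by
      rw [← r'.toContinuousLinearEquivOfDetNeZero_apply hdet,
        ContinuousLinearEquiv.apply_symm_apply]⟩
  have hconst : HasFDerivAt (fun y => ⟪r y, r y⟫) (0 : E →L[ℝ] ℝ) x :=
    (hasFDerivAt_const (R ^ 2) x).congr_of_eventuallyEq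
      (hnorm.mono fun y hy => show ⟪r y, r y⟫ = R ^ 2 by rw [real_inner_self_eq_norm_sq, hy])
  -- differentiating `⟪r, r⟫ = R ^ 2` in the direction `v` gives `2 ⟪r x, r x⟫ = 0`
  have h := congr($((hr.inner ℝ hr).unique hconst) v)
  simp only [fderivInnerCLM_apply, comp_apply, prod_apply, hv, zero_apply] at h
  rw [real_inner_self_eq_norm_sq, hnorm.self_of_nhds] at h
  exact hR (pow_eq_zero_iff two_ne_zero |>.mp (by linarith))

theorem injOn_add_smul_of_norm_sub_le {E : Type*} [NormedAddCommGroup E] [NormedSpace ℝ E]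
    {s : Set E} {Φ : E → E} {C τ : ℝ} (hΦ : ∀ x ∈ s, ∀ y ∈ s, ‖Φ y - Φ x‖ ≤ C * ‖y - x‖)
    (hτ : 0 ≤ τ) (hτC : τ * C < 1) : InjOn (fun x => x + τ • Φ x) s := by
  intro x hx y hy hxy
  have hdiff : x - y = τ • (Φ y - Φ x) := by
    rw [smul_sub, sub_eq_sub_iff_add_eq_add]
    exact hxy.trans (add_comm _ _)
  have hle : ‖x - y‖ ≤ τ * C * ‖x - y‖ :=
    calc ‖x - y‖ = τ * ‖Φ y - Φ x‖ := by rw [hdiff, norm_smul, Real.norm_of_nonneg hτ]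
      _ ≤ τ * (C * ‖y - x‖) := mul_le_mul_of_nonneg_left (hΦ x hx y hy) hτ
      _ = τ * C * ‖x - y‖ := by rw [norm_sub_rev]; ring
  have : ‖x - y‖ = 0 := by nlinarith [norm_nonneg (x - y)]
  rwa [norm_eq_zero, sub_eq_zero] at this

theorem isOpen_image_of_hasStrictFDerivAt_det_ne_zero {𝕜 E : Type*} [NontriviallyNormedField 𝕜]
    [CompleteSpace 𝕜] [NormedAddCommGroup E] [NormedSpace 𝕜 E] [FiniteDimensional 𝕜 E]
    {f : E → E} {f' : E → E →L[𝕜] E} {s : Set E} (hs : IsOpen s)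
    (hf : ∀ x ∈ s, HasStrictFDerivAt f (f' x) x) (hdet : ∀ x ∈ s, (f' x).det ≠ 0) :
    IsOpen (f '' s) := by
  have := FiniteDimensional.complete 𝕜 E
  rw [isOpen_iff_mem_nhds]
  rintro _ ⟨x, hx, rfl⟩
  have hequiv : HasStrictFDerivAt f
      ((f' x).toContinuousLinearEquivOfDetNeZero (hdet x hx) : E →L[𝕜] E) x := by
    rw [ContinuousLinearMap.coe_toContinuousLinearEquivOfDetNeZero]
    exact hf x hx
  rw [← hequiv.map_nhds_eq_of_equiv]
  exact Filter.image_mem_map (hs.mem_nhds hx)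

theorem image_closedBall_eq_of_isOpen_image_ball {E : Type*} [NormedAddCommGroup E]
    [NormedSpace ℝ E] [ProperSpace E] {R : ℝ} (hR : 0 < R) {f : E → E}
    (hf : ContinuousOn f (closedBall 0 R)) (hball : MapsTo f (ball 0 R) (ball 0 R))
    (hsphere : EqOn f id (sphere 0 R)) (hopen : IsOpen (f '' ball 0 R)) :
    f '' closedBall 0 R = closedBall 0 R := by
  have hclosed : IsClosed (f '' ball 0 R ∪ sphere 0 R) := by
    rw [← hsphere.image_eq_self, ← image_union, ball_union_sphere]
    exact ((isCompact_closedBall 0 R).image_of_continuousOn hf).isClosed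
  have hsub : ball (0 : E) R ⊆ f '' ball 0 R := by
    refine (convex_ball (0 : E) R).isPreconnected.subset_of_closure_inter_subset hopen
      ⟨f 0, hball (mem_ball_self hR), mem_image_of_mem f (mem_ball_self hR)⟩ ?_
    rintro y ⟨hyc, hyb⟩
    rcases closure_minimal subset_union_left hclosed hyc with hy | hy
    · exact hy
    · exact absurd hy (ne_of_lt (mem_ball.mp hyb))
  rw [← ball_union_sphere, image_union, hsphere.image_eq_self,
    (image_subset_iff.mpr hball).antisymm hsub]

section Retraction

variable {E : Type*} [NormedAddCommGroup E] {R : ℝ} {U : Set E} {r : E → E}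

theorem mapsTo_ball_add_smul_sub [NormedSpace ℝ E]
    (hrB : MapsTo r (closedBall 0 R) (closedBall 0 R)) {τ : ℝ} (hτ0 : 0 ≤ τ) (hτ1 : τ < 1) :
    MapsTo (fun x => x + τ • (r x - x)) (ball 0 R) (ball 0 R) := by
  intro x hx
  have hx' := mem_ball_zero_iff.mp hx
  have hrx := mem_closedBall_zero_iff.mp (hrB (ball_subset_closedBall hx))
  have hconv : x + τ • (r x - x) = (1 - τ) • x + τ • r x := by
    rw [smul_sub, sub_smul, one_smul]
    abel
  rw [mem_ball_zero_iff]
  dsimp only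
  rw [hconv]
  calc ‖(1 - τ) • x + τ • r x‖ ≤ (1 - τ) * ‖x‖ + τ * ‖r x‖ := by
        refine (norm_add_le _ _).trans_eq ?_
        rw [norm_smul, norm_smul, Real.norm_of_nonneg (by linarith), Real.norm_of_nonneg hτ0]
    _ < R := by nlinarith

theorem integral_det_one_add_smul_eq_measureReal [NormedSpace ℝ E] [FiniteDimensional ℝ E]
    [MeasurableSpace E] [BorelSpace E] (μ : Measure E) [μ.IsAddHaarMeasure] (hR : 0 < R)
    (hU : IsOpen U) (hBU : closedBall 0 R ⊆ U) (hr : ContDiffOn ℝ 1 r U)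
    (hrB : MapsTo r (closedBall 0 R) (closedBall 0 R)) (hrid : EqOn r id (sphere 0 R))
    {C τ : ℝ} (hC : ∀ x ∈ closedBall (0 : E) R, ‖fderiv ℝ r x - 1‖ ≤ C)
    (hτ0 : 0 ≤ τ) (hτ1 : τ < 1) (hτC : τ * C < 1) :
    ∫ x in closedBall 0 R, (1 + τ • (fderiv ℝ r x - 1)).det ∂μ = μ.real (closedBall 0 R) := by
  set f : E → E := fun x => x + τ • (r x - x)
  have hr' : ∀ x ∈ U, HasStrictFDerivAt r (fderiv ℝ r x) x := fun x hx =>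
    (hr.contDiffAt (hU.mem_nhds hx)).hasStrictFDerivAt one_ne_zero
  have hf' : ∀ x ∈ U, HasStrictFDerivAt f (1 + τ • (fderiv ℝ r x - 1)) x := fun x hx =>
    (hasStrictFDerivAt_id x).add (((hr' x hx).sub (hasStrictFDerivAt_id x)).const_smul τ)
  have hdet : ∀ x ∈ closedBall (0 : E) R, 0 < (1 + τ • (fderiv ℝ r x - 1)).det := by
    refine fun x hx => ContinuousLinearMap.det_one_add_pos_of_norm_lt_one ?_
    rw [norm_smul, Real.norm_of_nonneg hτ0]
    exact (mul_le_mul_of_nonneg_left (hC x hx) hτ0).trans_lt hτC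
  have hinj : InjOn f (closedBall 0 R) :=
    injOn_add_smul_of_norm_sub_le (fun x hx y hy =>
      (convex_closedBall 0 R).norm_image_sub_le_of_norm_hasFDerivWithin_le
        (fun z hz => ((hr' z (hBU hz)).hasFDerivAt.sub (hasFDerivAt_id z)).hasFDerivWithinAt)
        hC hx hy) hτ0 hτC
  have himage : f '' closedBall 0 R = closedBall 0 R :=
    image_closedBall_eq_of_isOpen_image_ball hR
      (fun x hx => (hf' x (hBU hx)).hasFDerivAt.continuousAt.continuousWithinAt)
      (mapsTo_ball_add_smul_sub hrB hτ0 hτ1) (fun x hx => by simp [f, hrid hx])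
      (isOpen_image_of_hasStrictFDerivAt_det_ne_zero isOpen_ball
        (fun x hx => hf' x (hBU (ball_subset_closedBall hx)))
        (fun x hx => (hdet x (ball_subset_closedBall hx)).ne'))
  have hcov := integral_image_eq_integral_abs_det_fderiv_smul μ measurableSet_closedBall
    (fun x hx => (hf' x (hBU hx)).hasFDerivAt.hasFDerivWithinAt) hinj fun _ => (1 : ℝ)
  rw [himage, setIntegral_const, smul_eq_mul, mul_one] at hcov
  rw [hcov]
  refine setIntegral_congr_fun measurableSet_closedBall fun x hx => ?_
  simp [abs_of_pos (hdet x hx)]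

theorem false_of_contDiffOn_retraction [InnerProductSpace ℝ E] [FiniteDimensional ℝ E]
    (hR : 0 < R) (hU : IsOpen U) (hBU : closedBall 0 R ⊆ U) (hr : ContDiffOn ℝ 1 r U)
    (hrU : MapsTo r U (sphere 0 R)) (hrid : EqOn r id (sphere 0 R)) : False := by
  borelize E
  set μ : Measure E := Measure.addHaar
  set B := closedBall (0 : E) R
  set A : E → E →L[ℝ] E := fun x => fderiv ℝ r x - 1
  have hA : ContinuousOn A U := (hr.continuousOn_fderiv_of_isOpen hU le_rfl).sub continuousOn_const
  obtain ⟨M, hM⟩ := (isCompact_closedBall (0 : E) R).exists_bound_of_continuousOn (hA.mono hBU)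
  have hint (τ : ℝ) : Integrable (fun x => (1 + τ • A x).det) (μ.restrict B) :=
    (ContinuousLinearMap.continuous_det.comp_continuousOn
      (continuousOn_const.add ((hA.mono hBU).const_smul τ))).integrableOn_compact
      (isCompact_closedBall 0 R)
  have hsmall : ∀ τ ∈ Ico 0 (1 / (|M| + 1)), ∫ x in B, (1 + τ • A x).det ∂μ = μ.real B := by
    rintro τ ⟨hτ0, hτ⟩
    have hτ' : τ * (|M| + 1) < 1 := by rwa [lt_div_iff₀ (by positivity)] at hτ
    exact integral_det_one_add_smul_eq_measureReal μ hR hU hBU hr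
      ((hrU.mono_left hBU).mono_right sphere_subset_closedBall) hrid hM hτ0
      (by nlinarith [abs_nonneg M]) (by nlinarith [le_abs_self M, abs_nonneg M])
  have hvol := integral_det_one_add_smul_eq_of_infinite hint (Ico_infinite (by positivity)) hsmall 1
  have hzero : ∫ x in B, (1 + (1 : ℝ) • A x).det ∂μ = 0 := by
    refine setIntegral_eq_zero_of_forall_eq_zero fun x hx => ?_
    rw [one_smul, add_sub_cancel]
    exact ContinuousLinearMap.det_eq_zero_of_eventually_norm_eq
      ((hr.differentiableOn one_ne_zero x (hBU hx)).differentiableAt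
        (hU.mem_nhds (hBU hx))).hasFDerivAt hR.ne'
      (Filter.mem_of_superset (hU.mem_nhds (hBU hx)) fun y hy =>
        mem_sphere_zero_iff_norm.mp (hrU hy))
  have hpos : 0 < μ.real B :=
    ENNReal.toReal_pos (measure_closedBall_pos μ 0 hR).ne' measure_closedBall_lt_top.ne
  linarith

end Retraction

theorem Continuous.exists_contDiff_dist_lt_of_isCompact {E F : Type*} [NormedAddCommGroup E]
    [NormedSpace ℝ E] [FiniteDimensional ℝ E] [NormedAddCommGroup F] [NormedSpace ℝ F]
    [CompleteSpace F] {f : E → F} (hf : Continuous f) {K : Set E} (hK : IsCompact K) {ε : ℝ}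
    (hε : 0 < ε) : ∃ g : E → F, ContDiff ℝ ∞ g ∧ ∀ x ∈ K, dist (g x) (f x) < ε := by
  have hdense := ContinuousMap.dense_setOfPred_contDiff (E := E) (F := F) ⟨f, hf⟩
  rw [mem_closure_iff_nhds_basis
    (nhds_basis_uniformity uniformity_basis_dist.compactConvergenceUniformity)] at hdense
  obtain ⟨g, hg, hgK⟩ := hdense (K, ε) ⟨hK, hε⟩
  exact ⟨g, hg, hgK⟩

section Brouwer

variable {E : Type*} [NormedAddCommGroup E] [InnerProductSpace ℝ E] {R : ℝ}

theorem inner_sub_pos_of_norm_le {x y : E} (hy : ‖y‖ ≤ ‖x‖) (hxy : x ≠ y) : 0 < ⟪x, x - y⟫ := by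
  have hpos : 0 < ‖x - y‖ := norm_pos_iff.mpr (sub_ne_zero.mpr hxy)
  have hsq := norm_sub_sq_real x y
  rw [inner_sub_right, real_inner_self_eq_norm_sq]
  nlinarith [norm_nonneg y]

theorem norm_add_smul_root_eq {x u : E} (hR : 0 ≤ R) (hu : u ≠ 0)
    (hd : 0 ≤ ⟪x, u⟫ ^ 2 + ‖u‖ ^ 2 * (R ^ 2 - ‖x‖ ^ 2)) :
    ‖x + ((-⟪x, u⟫ + √(⟪x, u⟫ ^ 2 + ‖u‖ ^ 2 * (R ^ 2 - ‖x‖ ^ 2))) / ‖u‖ ^ 2) • u‖ = R := by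
  have hsqrt := Real.sq_sqrt hd
  have hu' : ‖u‖ ≠ 0 := norm_ne_zero_iff.mpr hu
  refine (pow_left_inj₀ (norm_nonneg _) hR two_ne_zero).mp ?_
  rw [norm_add_sq_real, norm_smul, mul_pow, Real.norm_eq_abs, sq_abs, real_inner_smul_right]
  field_simp
  linear_combination hsqrt

theorem exists_contDiffOn_retraction_of_forall_ne {g : E → E} (hR : 0 < R) (hg : ContDiff ℝ 1 g)
    (hgB : MapsTo g (closedBall 0 R) (closedBall 0 R)) (hfix : ∀ x ∈ closedBall 0 R, g x ≠ x) :
    ∃ U : Set E, ∃ r : E → E, IsOpen U ∧ closedBall 0 R ⊆ U ∧ ContDiffOn ℝ 1 r U ∧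
      MapsTo r U (sphere 0 R) ∧ EqOn r id (sphere 0 R) := by
  -- `t x` is the larger root of the quadratic `‖x + t • u x‖ ^ 2 = R ^ 2`, i.e.
  -- `b x * t ^ 2 + 2 * a x * t - c x = 0`; it is a `C¹` function of `x` where
  -- `u x ≠ 0` and `d x > 0`.
  set u : E → E := fun x => x - g x
  set a : E → ℝ := fun x => ⟪x, u x⟫
  set b : E → ℝ := fun x => ‖u x‖ ^ 2
  set c : E → ℝ := fun x => R ^ 2 - ‖x‖ ^ 2
  set d : E → ℝ := fun x => a x ^ 2 + b x * c x
  set t : E → ℝ := fun x => (-a x + √(d x)) / b x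
  have hu : ContDiff ℝ 1 u := contDiff_id.sub hg
  have ha : ContDiff ℝ 1 a := contDiff_id.inner ℝ hu
  have hb : ContDiff ℝ 1 b := hu.norm_sq ℝ
  have hd : ContDiff ℝ 1 d := (ha.pow 2).add (hb.mul (contDiff_const.sub (contDiff_norm_sq ℝ)))
  have hsphere : ∀ x ∈ sphere (0 : E) R, 0 < a x := fun x hx =>
    inner_sub_pos_of_norm_le
      ((mem_closedBall_zero_iff.mp (hgB (sphere_subset_closedBall hx))).trans_eq
        (mem_sphere_zero_iff_norm.mp hx).symm)
      (hfix x (sphere_subset_closedBall hx)).symm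
  refine ⟨{x | u x ≠ 0 ∧ 0 < d x}, fun x => x + t x • u x,
    (isOpen_ne_fun hu.continuous continuous_const).inter (isOpen_lt continuous_const hd.continuous),
    fun x hx => ?_, fun x hx => ?_, fun x hx => ?_, fun x hx => ?_⟩
  · have hux : u x ≠ 0 := sub_ne_zero.mpr (hfix x hx).symm
    have hbx : 0 < b x := pow_pos (norm_pos_iff.mpr hux) 2
    refine ⟨hux, ?_⟩
    rcases (mem_closedBall_zero_iff.mp hx).lt_or_eq with hlt | heq
    · have hcx : 0 < c x := by simp only [c]; nlinarith [norm_nonneg x]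
      simp only [d]
      nlinarith [sq_nonneg (a x)]
    · have hcx : c x = 0 := by simp [c, heq]
      have hax := hsphere x (mem_sphere_zero_iff_norm.mpr heq)
      simp only [d, hcx, mul_zero, add_zero]
      positivity
  · have ht : ContDiffAt ℝ 1 t x :=
      (ha.contDiffAt.neg.add ((Real.contDiffAt_sqrt hx.2.ne').comp x hd.contDiffAt)).div
        hb.contDiffAt (pow_ne_zero 2 (norm_ne_zero_iff.mpr hx.1))
    exact (contDiffAt_id.add (ht.smul hu.contDiffAt)).contDiffWithinAt
  · exact mem_sphere_zero_iff_norm.mpr (norm_add_smul_root_eq hR.le hx.1 hx.2.le)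
  · have hdx : d x = a x ^ 2 := by simp [d, c, mem_sphere_zero_iff_norm.mp hx]
    simp [t, hdx, Real.sqrt_sq (hsphere x hx).le]

theorem exists_fixedPoint_of_contDiff_mapsTo_closedBall [FiniteDimensional ℝ E] (hR : 0 < R)
    {g : E → E} (hg : ContDiff ℝ 1 g) (hgB : MapsTo g (closedBall 0 R) (closedBall 0 R)) :
    ∃ x ∈ closedBall 0 R, g x = x := by
  by_contra! hfix
  obtain ⟨U, r, hU, hBU, hr, hrU, hrid⟩ := exists_contDiffOn_retraction_of_forall_ne hR hg hgB hfix
  exact false_of_contDiffOn_retraction hR hU hBU hr hrU hrid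

theorem exists_fixedPoint_of_mapsTo_closedBall [FiniteDimensional ℝ E] (hR : 0 < R) {f : E → E}
    (hf : Continuous f) (hfB : MapsTo f (closedBall 0 R) (closedBall 0 R)) :
    ∃ x ∈ closedBall 0 R, f x = x := by
  obtain ⟨x₀, hx₀, hmin⟩ := (isCompact_closedBall (0 : E) R).exists_isMinOn
    (nonempty_closedBall.mpr hR.le) (hf.sub continuous_id).norm.continuousOn
  refine ⟨x₀, hx₀, sub_eq_zero.mp (norm_le_zero_iff.mp (le_of_forall_pos_lt_add fun δ hδ => ?_))⟩
  obtain ⟨g, hg, hgf⟩ := hf.exists_contDiff_dist_lt_of_isCompact (isCompact_closedBall 0 R)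
    (half_pos hδ)
  -- shrinking `g` by the factor `R / (R + δ / 2)` makes it map the ball into itself
  set s : ℝ := R / (R + δ / 2)
  have hs : 1 - s = δ / 2 / (R + δ / 2) := by simp only [s]; field_simp; ring
  have hgR : ∀ x ∈ closedBall (0 : E) R, ‖g x‖ < R + δ / 2 := fun x hx =>
    (norm_le_norm_add_norm_sub' _ _).trans_lt (add_lt_add_of_le_of_lt
      (mem_closedBall_zero_iff.mp (hfB hx)) (by rw [← dist_eq_norm]; exact hgf x hx))
  obtain ⟨x, hx, hgx⟩ := exists_fixedPoint_of_contDiff_mapsTo_closedBall hR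
    ((hg.of_le (by exact_mod_cast le_top)).const_smul s) fun x hx => by
      rw [mem_closedBall_zero_iff, norm_smul, Real.norm_of_nonneg (by positivity)]
      calc s * ‖g x‖ ≤ s * (R + δ / 2) := by gcongr; exact (hgR x hx).le
        _ = R := by simp only [s]; field_simp
  calc ‖f x₀ - x₀‖ ≤ ‖f x - x‖ := hmin hx
    _ = ‖(f x - g x) + (1 - s) • g x‖ := by
        congr 1; rw [sub_smul, one_smul, hgx]; abel
    _ ≤ ‖f x - g x‖ + (1 - s) * ‖g x‖ := by
        refine (norm_add_le _ _).trans_eq ?_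
        rw [norm_smul, Real.norm_of_nonneg (by rw [hs]; positivity)]
    _ < δ / 2 + δ / 2 := by
        gcongr
        · rw [← dist_eq_norm, dist_comm]; exact hgf x hx
        · rw [hs, div_mul_eq_mul_div, div_lt_iff₀ (by positivity)]
          nlinarith [hgR x hx]
    _ = 0 + δ := by ring

end Brouwer

theorem exists_fixedPoint_of_isBounded_range {V : Type*} [NormedAddCommGroup V]
    [NormedSpace ℝ V] [FiniteDimensional ℝ V] {f : V → V} (hf : Continuous f)
    (hb : Bornology.IsBounded (range f)) : ∃ x, f x = x := by
  let e : V ≃L[ℝ] EuclideanSpace ℝ (Fin (Module.finrank ℝ V)) :=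
    ContinuousLinearEquiv.ofFinrankEq finrank_euclideanSpace_fin.symm
  obtain ⟨R, hR, hsub⟩ := (e.lipschitz.isBounded_image hb).subset_closedBall_lt 0 0
  obtain ⟨y, -, hy⟩ := exists_fixedPoint_of_mapsTo_closedBall hR
    (e.continuous.comp (hf.comp e.symm.continuous))
    fun y _ => hsub (mem_image_of_mem e (mem_range_self (e.symm y)))
  exact ⟨e.symm y, by simpa using congr(e.symm $hy)⟩

theorem exists_fixedPoint_of_mapsTo_Icc {ι : Type*} [Fintype ι] {a b : ι → ℝ} (hab : a ≤ b)
    {f : (ι → ℝ) → ι → ℝ} (hf : ContinuousOn f (Icc a b)) (hfab : MapsTo f (Icc a b) (Icc a b)) :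
    ∃ x ∈ Icc a b, f x = x := by
  set clamp : (ι → ℝ) → ι → ℝ := fun x i => max (a i) (min (b i) (x i))
  have hclamp : ∀ x, clamp x ∈ Icc a b := fun x =>
    ⟨fun i => le_max_left _ _, fun i => max_le (hab i) (min_le_left _ _)⟩
  have hclamp_id : ∀ x ∈ Icc a b, clamp x = x := fun x hx =>
    funext fun i => by simp [clamp, hx.1 i, hx.2 i]
  have hcont : Continuous (f ∘ clamp) := hf.comp_continuous
    (continuous_pi fun i => continuous_const.max (continuous_const.min (continuous_apply i)))
    hclamp
  obtain ⟨x, hx⟩ := exists_fixedPoint_of_isBounded_range hcont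
    ((Metric.isBounded_Icc a b).subset (range_subset_iff.mpr fun x => hfab (hclamp x)))
  have hxab : x ∈ Icc a b := hx ▸ hfab (hclamp x)
  exact ⟨x, hxab, (congrArg f (hclamp_id x hxab)).symm.trans hx⟩

theorem stmt_16_general {n : ℕ} (T : (Fin n → ℝ) → (Fin n → ℝ))
    (hcont : Continuous T)
    (hanti : ∀ lam mu : Fin n → ℝ, lam ≤ mu → T mu ≤ T lam)
    (lamstar : Fin n → ℝ) (hpos : 0 ≤ lamstar)
    (hup : T lamstar ≤ Real.sqrt n • lamstar)
    (hlow : T (Real.sqrt n • lamstar) = lamstar) :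
    ∃ lam' : Fin n → ℝ, T lam' = lam' ∧ lamstar ≤ lam' ∧ lam' ≤ Real.sqrt n • lamstar := by
  have hle : lamstar ≤ Real.sqrt n • lamstar := fun i =>
    le_mul_of_one_le_left (hpos i) (Real.one_le_sqrt.mpr (Nat.one_le_cast.mpr i.pos))
  obtain ⟨x, hx, hTx⟩ := exists_fixedPoint_of_mapsTo_Icc hle hcont.continuousOn
    fun x hx => ⟨hlow ▸ hanti _ _ hx.2, (hanti _ _ hx.1).trans hup⟩
  exact ⟨x, hTx, hx⟩

/-- Brouwer fixed-point step: if `T` is continuous and order-reversing (coordinatewise) and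
`λ* ≥ 0` satisfies `T(λ*) ≤ √n λ*` and `T(√n λ*) = λ*`, then `T` has a fixed point in the box
`[λ*, √n λ*]`. -/
theorem stmt_16 {n : ℕ} (hn : 1 ≤ n) (T : (Fin n → ℝ) → (Fin n → ℝ))
    (hcont : Continuous T)
    (hanti : ∀ lam mu : Fin n → ℝ, lam ≤ mu → T mu ≤ T lam)
    (lamstar : Fin n → ℝ) (hpos : 0 ≤ lamstar)
    (hup : T lamstar ≤ Real.sqrt n • lamstar)
    (hlow : T (Real.sqrt n • lamstar) = lamstar) :
    ∃ lam' : Fin n → ℝ, T lam' = lam' ∧ lamstar ≤ lam' ∧ lam' ≤ Real.sqrt n • lamstar :=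
  stmt_16_general T hcont hanti lamstar hpos hup hlow
end
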